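/- arXiv:2604.08234 — 2 statements merged into one kernel-verified Lean document; each statement's English description precedes it below -/
import Mathlib

section
/- Let 𝓘 and 𝓘' be two irreducible sequences (each of length at least 2) of coloring channels over Σ = [q]. If the pairs graph P_𝓘 is a subgraph of P_𝓘' (i.e., E_𝓘 ⊆ E_𝓘'), then |A_𝓘(n)| ≤ |A_𝓘'(n)| for all n, and cap(𝓘) ≤ cap(𝓘'). -/
/-- The output of a single coloring channel `I`: the subsequence of `x`
consisting (in order) of the letters of `x` that belong to `I`. -/
def channelOutput {q : ℕ} (I : Finset (Fin q)) (x : List (Fin q)) : List (Fin q) :=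
  x.filter (fun a => a ∈ I)

/-- The set `A_𝓘(n)` of all tuples of channel outputs over inputs of length `n`. -/
def channelOutputs {q : ℕ} {ι : Type} (𝓘 : ι → Finset (Fin q)) (n : ℕ) :
    Set (ι → List (Fin q)) :=
  { y | ∃ x : List (Fin q), x.length = n ∧ y = fun i => channelOutput (𝓘 i) x }

/-- The capacity of a sequence of coloring channels:
`limsup_{n→∞} (1/n) log_q |A_𝓘(n)|`. -/
noncomputable def capacity {q : ℕ} {ι : Type} (𝓘 : ι → Finset (Fin q)) : ℝ :=
  Filter.atTop.limsup fun n : ℕ =>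
    Real.logb q ((channelOutputs 𝓘 n).ncard : ℝ) / (n : ℝ)

/-- The binary entropy function (with `H(0) = H(1) = 0`). -/
noncomputable def binH (x : ℝ) : ℝ :=
  -(x * Real.logb 2 x) - (1 - x) * Real.logb 2 (1 - x)

/-!
A word over an alphabet with at least two letters is determined by its projections onto the
two-letter subalphabets: comparing projections onto the pair formed by the first letters of two
words shows that those letters agree. Irreducibility forces every channel of `𝓘` to have at least
two letters (a one-letter channel is either contained in another channel or separated from all of
them), and every pair inside a channel of `𝓘` lies in a channel of `𝓙`, so `x_𝓙` determines
`x_𝓘`. Hence `A_𝓘(n)` is the image of `A_𝓙(n)` under a map, and the capacity inequality follows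
by monotonicity of `limsup`, the rates `log_q |A(n)| / n` lying in `[0, 1]`.
-/

theorem List.eq_of_forall_filter_mem_eq_of_card_eq_two {α : Type*} [DecidableEq α]
    {S : Finset α} (hS : S.Nontrivial) :
    ∀ {l l' : List α}, (∀ a ∈ l, a ∈ S) → (∀ a ∈ l', a ∈ S) →
      (∀ e ⊆ S, e.card = 2 → l.filter (· ∈ e) = l'.filter (· ∈ e)) → l = l'
  | [], [], _, _, _ => rfl
  | [], b :: _, _, hl', h => by
    obtain ⟨c, hc, hcb⟩ := hS.exists_ne b
    have := h {b, c} (Finset.insert_subset (hl' b (by simp)) (by simpa)) (Finset.card_pair hcb.symm)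
    simp at this
  | a :: _, [], hl, _, h => by
    obtain ⟨c, hc, hca⟩ := hS.exists_ne a
    have := h {a, c} (Finset.insert_subset (hl a (by simp)) (by simpa)) (Finset.card_pair hca.symm)
    simp at this
  | a :: l, b :: l', hl, hl', h => by
    have ha := hl a (by simp)
    have hb := hl' b (by simp)
    obtain rfl : a = b := by
      by_contra hab
      have := h {a, b} (Finset.insert_subset ha (by simpa)) (Finset.card_pair hab)
      simp at this
      exact hab this.1
    congr 1
    refine List.eq_of_forall_filter_mem_eq_of_card_eq_two hS (fun x hx => hl x (by simp [hx]))
      (fun x hx => hl' x (by simp [hx])) fun e he he2 => ?_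
    have := h e he he2
    by_cases hae : a ∈ e <;> simpa [List.filter_cons, hae] using this

theorem Set.ncard_image_le_ncard_image_of_eq_imp_eq {α β γ : Type*} {s : Set α} {f : α → β}
    {g : α → γ} (hf : (f '' s).Finite) (h : ∀ a ∈ s, ∀ b ∈ s, f a = f b → g a = g b) :
    (g '' s).ncard ≤ (f '' s).ncard := by
  rcases s.eq_empty_or_nonempty with rfl | ⟨a₀, -⟩
  · simp
  have : Nonempty α := ⟨a₀⟩
  have hfactor : (g ∘ Function.invFunOn f s) '' (f '' s) = g '' s := by
    rw [Set.image_image]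
    exact Set.image_congr fun a ha =>
      h _ (Function.invFunOn_mem ⟨a, ha, rfl⟩) a ha (Function.invFunOn_eq ⟨a, ha, rfl⟩)
  exact hfactor ▸ Set.ncard_image_le hf

theorem Finset.nontrivial_of_not_separable {α ι : Type*} [DecidableEq α] [Fintype ι]
    [DecidableEq ι] [Nontrivial ι] {𝓘 : ι → Finset α}
    (hsub : ∀ i j, i ≠ j → ¬ 𝓘 i ⊆ 𝓘 j)
    (hnsep : ¬ ∃ S : Finset ι, S.Nonempty ∧ S ≠ Finset.univ ∧
      (S.biUnion 𝓘) ∩ (Sᶜ.biUnion 𝓘) = ∅) (i : ι) :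
    (𝓘 i).Nontrivial := by
  by_contra hI
  replace hI : (𝓘 i : Set α).Subsingleton := Set.not_nontrivial_iff.mp hI
  refine hnsep ⟨{i}, Finset.singleton_nonempty i, Finset.singleton_ne_univ i,
    Finset.eq_empty_of_forall_notMem fun b hb => ?_⟩
  simp only [Finset.mem_inter, Finset.singleton_biUnion, Finset.mem_biUnion, Finset.mem_compl,
    Finset.mem_singleton] at hb
  obtain ⟨hbi, k, hki, hbk⟩ := hb
  exact hsub i k (Ne.symm hki) fun a ha => hI ha hbi ▸ hbk

section ChannelOutput

variable {q : ℕ} {ι κ : Type}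

theorem channelOutput_channelOutput_of_subset {e I : Finset (Fin q)} (h : e ⊆ I)
    (x : List (Fin q)) : channelOutput e (channelOutput I x) = channelOutput e x := by
  simp only [channelOutput, List.filter_filter]
  exact List.filter_congr fun a _ => by
    by_cases ha : a ∈ e
    · simp [ha, h ha]
    · simp [ha]

theorem mem_of_mem_channelOutput {I : Finset (Fin q)} {x : List (Fin q)} {a : Fin q}
    (ha : a ∈ channelOutput I x) : a ∈ I := by
  simpa using (List.mem_filter.mp ha).2

theorem channelOutput_eq_of_forall_channelOutput_eq {I : Finset (Fin q)}
    (hI : I.Nontrivial) {𝓙 : ι → Finset (Fin q)}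
    (hpairs : ∀ e ⊆ I, e.card = 2 → ∃ j, e ⊆ 𝓙 j) {x x' : List (Fin q)}
    (h : ∀ j, channelOutput (𝓙 j) x = channelOutput (𝓙 j) x') :
    channelOutput I x = channelOutput I x' := by
  refine List.eq_of_forall_filter_mem_eq_of_card_eq_two hI (fun _ => mem_of_mem_channelOutput)
    (fun _ => mem_of_mem_channelOutput) fun e heI he => ?_
  obtain ⟨j, hej⟩ := hpairs e heI he
  change channelOutput e (channelOutput I x) = channelOutput e (channelOutput I x')
  rw [channelOutput_channelOutput_of_subset heI, channelOutput_channelOutput_of_subset heI,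
    ← channelOutput_channelOutput_of_subset hej, h j, channelOutput_channelOutput_of_subset hej]

theorem channelOutputs_eq_image (𝓘 : ι → Finset (Fin q)) (n : ℕ) :
    channelOutputs 𝓘 n = (fun x i => channelOutput (𝓘 i) x) '' {x | x.length = n} := by
  ext y
  simp [channelOutputs, eq_comm]

theorem channelOutputs_finite (𝓘 : ι → Finset (Fin q)) (n : ℕ) :
    (channelOutputs 𝓘 n).Finite :=
  channelOutputs_eq_image 𝓘 n ▸ (List.finite_length_eq _ n).image _

theorem ncard_channelOutputs_le (𝓘 : ι → Finset (Fin q)) (n : ℕ) :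
    (channelOutputs 𝓘 n).ncard ≤ q ^ n := by
  rw [channelOutputs_eq_image]
  refine (Set.ncard_image_le (List.finite_length_eq _ n)).trans_eq ?_
  rw [← Nat.card_coe_set_eq]
  exact (Nat.card_eq_fintype_card (α := List.Vector (Fin q) n)).trans (by simp)

theorem ncard_channelOutputs_pos (hq : 0 < q) (𝓘 : ι → Finset (Fin q)) (n : ℕ) :
    0 < (channelOutputs 𝓘 n).ncard :=
  (Set.ncard_pos (channelOutputs_finite 𝓘 n)).mpr ⟨_, List.replicate n ⟨0, hq⟩, by simp, rfl⟩

theorem ncard_channelOutputs_le_of_pairs {𝓘 : ι → Finset (Fin q)} {𝓙 : κ → Finset (Fin q)}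
    (hI : ∀ i, (𝓘 i).Nontrivial)
    (hedges : ∀ e : Finset (Fin q), e.card = 2 → (∃ i, e ⊆ 𝓘 i) → ∃ j, e ⊆ 𝓙 j) (n : ℕ) :
    (channelOutputs 𝓘 n).ncard ≤ (channelOutputs 𝓙 n).ncard := by
  rw [channelOutputs_eq_image, channelOutputs_eq_image]
  refine Set.ncard_image_le_ncard_image_of_eq_imp_eq
    ((List.finite_length_eq _ n).image _) fun x _ x' _ h => funext fun i => ?_
  exact channelOutput_eq_of_forall_channelOutput_eq (hI i)
    (fun e he he2 => hedges e he2 ⟨i, he⟩) (congrFun h)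

theorem logb_ncard_channelOutputs_div_mem_Icc (hq : 1 < q) (𝓘 : ι → Finset (Fin q)) (n : ℕ) :
    Real.logb q ((channelOutputs 𝓘 n).ncard : ℝ) / n ∈ Set.Icc (0 : ℝ) 1 := by
  have hq' : (1 : ℝ) < q := by exact_mod_cast hq
  have hpos : (0 : ℝ) < (channelOutputs 𝓘 n).ncard := by
    exact_mod_cast ncard_channelOutputs_pos (by omega) 𝓘 n
  have hlogb_le : Real.logb q ((channelOutputs 𝓘 n).ncard : ℝ) ≤ n :=
    calc Real.logb q ((channelOutputs 𝓘 n).ncard : ℝ)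
        ≤ Real.logb q ((q : ℝ) ^ n) :=
          Real.logb_le_logb_of_le hq' hpos (by exact_mod_cast ncard_channelOutputs_le 𝓘 n)
      _ = n := by rw [Real.logb_pow, Real.logb_self_eq_one hq', mul_one]
  refine ⟨div_nonneg (Real.logb_nonneg hq' (by exact_mod_cast hpos)) n.cast_nonneg, ?_⟩
  exact div_le_one_of_le₀ hlogb_le n.cast_nonneg

theorem capacity_le_capacity_of_ncard_le (hq : 1 < q) {𝓘 : ι → Finset (Fin q)}
    {𝓙 : κ → Finset (Fin q)}
    (h : ∀ n, (channelOutputs 𝓘 n).ncard ≤ (channelOutputs 𝓙 n).ncard) :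
    capacity 𝓘 ≤ capacity 𝓙 := by
  have hq' : (1 : ℝ) < q := by exact_mod_cast hq
  refine Filter.limsup_le_limsup (Filter.Eventually.of_forall fun n => ?_) ?_ ?_
  · refine div_le_div_of_nonneg_right (Real.logb_le_logb_of_le hq' ?_ (by exact_mod_cast h n))
      n.cast_nonneg
    exact_mod_cast ncard_channelOutputs_pos (by omega) 𝓘 n
  · exact Filter.isCoboundedUnder_le_of_le _
      fun n => (logb_ncard_channelOutputs_div_mem_Icc hq 𝓘 n).1
  · exact Filter.isBoundedUnder_of ⟨1, fun n => (logb_ncard_channelOutputs_div_mem_Icc hq 𝓙 n).2⟩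

end ChannelOutput

theorem pairs_graph_monotone_general (q t t' : ℕ) (hq : 2 ≤ q) (ht : 2 ≤ t)
    (𝓘 : Fin t → Finset (Fin q)) (𝓙 : Fin t' → Finset (Fin q))
    (hsub : ∀ i j : Fin t, i ≠ j → ¬ 𝓘 i ⊆ 𝓘 j)
    (hnsep : ¬ ∃ S : Finset (Fin t), S.Nonempty ∧ S ≠ Finset.univ ∧
      (S.biUnion 𝓘) ∩ (Sᶜ.biUnion 𝓘) = ∅)
    (hedges : ∀ e : Finset (Fin q), e.card = 2 → (∃ i, e ⊆ 𝓘 i) → ∃ j, e ⊆ 𝓙 j) :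
    (∀ n : ℕ, (channelOutputs 𝓘 n).ncard ≤ (channelOutputs 𝓙 n).ncard) ∧
    capacity 𝓘 ≤ capacity 𝓙 := by
  have : Nontrivial (Fin t) := Fin.nontrivial_iff_two_le.mpr ht
  have hmono := ncard_channelOutputs_le_of_pairs
    (Finset.nontrivial_of_not_separable hsub hnsep) hedges
  exact ⟨hmono, capacity_le_capacity_of_ncard_le (by omega) hmono⟩

/-- monotonicity of the number of output tuples and of the
capacity with respect to inclusion of pairs graphs. -/
theorem pairs_graph_monotone (q t t' : ℕ) (hq : 2 ≤ q) (ht : 2 ≤ t) (ht' : 2 ≤ t')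
    (𝓘 : Fin t → Finset (Fin q)) (𝓙 : Fin t' → Finset (Fin q))
    (hne : ∀ i, (𝓘 i).Nonempty) (hne' : ∀ j, (𝓙 j).Nonempty)
    (hsub : ∀ i j : Fin t, i ≠ j → ¬ 𝓘 i ⊆ 𝓘 j)
    (hsub' : ∀ i j : Fin t', i ≠ j → ¬ 𝓙 i ⊆ 𝓙 j)
    (hnsep : ¬ ∃ S : Finset (Fin t), S.Nonempty ∧ S ≠ Finset.univ ∧
      (S.biUnion 𝓘) ∩ (Sᶜ.biUnion 𝓘) = ∅)
    (hnsep' : ¬ ∃ S : Finset (Fin t'), S.Nonempty ∧ S ≠ Finset.univ ∧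
      (S.biUnion 𝓙) ∩ (Sᶜ.biUnion 𝓙) = ∅)
    (hedges : ∀ e : Finset (Fin q), e.card = 2 → (∃ i, e ⊆ 𝓘 i) → ∃ j, e ⊆ 𝓙 j) :
    (∀ n : ℕ, (channelOutputs 𝓘 n).ncard ≤ (channelOutputs 𝓙 n).ncard) ∧
    capacity 𝓘 ≤ capacity 𝓙 :=
  pairs_graph_monotone_general q t t' hq ht 𝓘 𝓙 hsub hnsep hedges
end

section
/- Let 𝓘 = (I_1,…,I_t), t ≥ 2, be an irreducible sequence of coloring channels over Σ = [q], and let k = ω(P_𝓘) be the clique number of the pairs graph of 𝓘. Then log_q k ≤ cap(𝓘) ≤ log_q (k t e), where e is Euler's number. -/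
/-!
Words over a clique `s` of the pairs graph are separated by the channels: where two such words
of the same length first differ, at letters `a ≠ b`, a channel containing both `a` and `b` sees
the difference. So `|A_𝓘(n)| ≥ kⁿ`. Conversely the outputs only depend on the input with the
letters outside `U = ⋃ Iᵢ` deleted, a word of length at most `n` over `U`, and `|U| ≤ k t` because
every channel is a clique; hence `|A_𝓘(n)| ≤ (n + 1) (k t)ⁿ ≤ (k t e)ⁿ`.
-/

open Filter Finset

section ChannelOutputs

variable {q : ℕ} {ι : Type} (𝓘 : ι → Finset (Fin q))

lemma channelOutput_cons (I : Finset (Fin q)) (a : Fin q) (x : List (Fin q)) :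
    channelOutput I (a :: x) = if a ∈ I then a :: channelOutput I x else channelOutput I x := by
  by_cases h : a ∈ I <;> simp [channelOutput, h]

lemma channelOutput_filter_of_subset {I U : Finset (Fin q)} (hIU : I ⊆ U) (x : List (Fin q)) :
    channelOutput I (x.filter (· ∈ U)) = channelOutput I x := by
  simp only [channelOutput, List.filter_filter]
  refine List.filter_congr fun a _ => ?_
  by_cases h : a ∈ I
  · simp [h, hIU h]
  · simp [h]

lemma channelOutputs_eq_range (n : ℕ) :
    channelOutputs 𝓘 n =
      Set.range fun f : Fin n → Fin q => fun i => channelOutput (𝓘 i) (List.ofFn f) := by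
  ext y
  constructor
  · rintro ⟨x, rfl, rfl⟩
    exact ⟨x.get, by simp only [List.ofFn_get]⟩
  · rintro ⟨f, rfl⟩
    exact ⟨List.ofFn f, List.length_ofFn, rfl⟩

lemma channelOutputs_finite_s17 (n : ℕ) : (channelOutputs 𝓘 n).Finite := by
  rw [channelOutputs_eq_range]
  exact Set.finite_range _

lemma one_le_ncard_channelOutputs (hq : 0 < q) (n : ℕ) : 1 ≤ (channelOutputs 𝓘 n).ncard := by
  have : Nonempty (Fin n → Fin q) := ⟨fun _ => ⟨0, hq⟩⟩
  refine (Set.ncard_pos (channelOutputs_finite_s17 𝓘 n)).2 ?_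
  rw [channelOutputs_eq_range]
  exact Set.range_nonempty _

lemma ncard_channelOutputs_le_pow (n : ℕ) : (channelOutputs 𝓘 n).ncard ≤ q ^ n := by
  rw [channelOutputs_eq_range, ← Nat.card_coe_set_eq]
  exact (Finite.card_range_le _).trans (by simp)

lemma eq_of_channelOutput_eq {s : Set (Fin q)}
    (hs : s.Pairwise fun u v => ∃ i, u ∈ 𝓘 i ∧ v ∈ 𝓘 i) :
    ∀ {x y : List (Fin q)}, (∀ a ∈ x, a ∈ s) → (∀ a ∈ y, a ∈ s) → x.length = y.length →
      (∀ i, channelOutput (𝓘 i) x = channelOutput (𝓘 i) y) → x = y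
  | [], [], _, _, _, _ => rfl
  | [], _ :: _, _, _, hlen, _ => by simp at hlen
  | _ :: _, [], _, _, hlen, _ => by simp at hlen
  | a :: x, b :: y, hx, hy, hlen, hout => by
    obtain rfl | hab := eq_or_ne a b
    · refine congrArg (a :: ·) (eq_of_channelOutput_eq hs (fun c hc => hx c (.tail _ hc))
        (fun c hc => hy c (.tail _ hc)) (by simpa using hlen) fun i => ?_)
      by_cases ha : a ∈ 𝓘 i <;> simpa [channelOutput_cons, ha] using hout i
    · obtain ⟨i, hai, hbi⟩ := hs (hx a (.head _)) (hy b (.head _)) hab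
      have := hout i
      simp only [channelOutput_cons, hai, hbi, if_true, List.cons.injEq] at this
      exact absurd this.1 hab

lemma pow_card_le_ncard_channelOutputs (s : Finset (Fin q))
    (hs : (s : Set (Fin q)).Pairwise fun u v => ∃ i, u ∈ 𝓘 i ∧ v ∈ 𝓘 i) (n : ℕ) :
    #s ^ n ≤ (channelOutputs 𝓘 n).ncard := by
  set g : (Fin n → s) → ι → List (Fin q) :=
    fun f i => channelOutput (𝓘 i) (List.ofFn fun j => (f j : Fin q))
  have hg : Function.Injective g := by
    intro f f' h
    have := eq_of_channelOutput_eq 𝓘 hs (by simp) (by simp) (by simp) (congrFun h)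
    funext j
    exact Subtype.ext (congrFun (List.ofFn_injective this) j)
  calc #s ^ n = (Set.range g).ncard := by rw [Set.ncard_range_of_injective hg]; simp
    _ ≤ _ := Set.ncard_le_ncard (by rintro _ ⟨f, rfl⟩; exact ⟨_, List.length_ofFn, rfl⟩)
      (channelOutputs_finite_s17 𝓘 n)

lemma ncard_channelOutputs_le_sum_pow {U : Finset (Fin q)} (hU : ∀ i, 𝓘 i ⊆ U) (n : ℕ) :
    (channelOutputs 𝓘 n).ncard ≤ ∑ m ∈ range (n + 1), #U ^ m := by
  set words : ℕ → Set (ι → List (Fin q)) := fun m =>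
    Set.range fun f : Fin m → U => fun i => channelOutput (𝓘 i) (List.ofFn fun j => (f j : Fin q))
  have hcover : channelOutputs 𝓘 n ⊆ ⋃ m ∈ range (n + 1), words m := by
    rintro _ ⟨x, rfl, rfl⟩
    set z := x.filter (· ∈ U)
    simp only [Set.mem_iUnion, mem_range]
    refine ⟨z.length, Nat.lt_succ_of_le (List.length_filter_le _ _),
      fun j => ⟨z.get j, by simpa using (List.mem_filter.1 (z.get_mem j)).2⟩, ?_⟩
    funext i
    simp only [List.ofFn_get]
    exact channelOutput_filter_of_subset (hU i) x
  refine (Set.ncard_le_ncard hcover ((finite_toSet _).biUnion fun m _ => Set.finite_range _)).trans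
    ((set_ncard_biUnion_le _ _).trans (sum_le_sum fun m _ => ?_))
  rw [← Nat.card_coe_set_eq]
  exact (Finite.card_range_le _).trans (by simp)

lemma logb_le_capacity_of_pow_le (hq : 1 < q) {c : ℝ} (hc : 0 < c)
    (h : ∀ n, c ^ n ≤ (channelOutputs 𝓘 n).ncard) : Real.logb q c ≤ capacity 𝓘 := by
  have hq' : (1 : ℝ) < q := by exact_mod_cast hq
  have hpos : ∀ n, (0 : ℝ) < (channelOutputs 𝓘 n).ncard := fun n => by
    exact_mod_cast one_le_ncard_channelOutputs 𝓘 (by omega) n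
  have hbdd : IsBoundedUnder (· ≤ ·) atTop
      fun n : ℕ => Real.logb q (channelOutputs 𝓘 n).ncard / n := by
    refine isBoundedUnder_of_eventually_le (a := 1) (eventually_atTop.2 ⟨1, fun n hn => ?_⟩)
    rw [div_le_one (by positivity)]
    calc Real.logb q (channelOutputs 𝓘 n).ncard ≤ Real.logb q ((q : ℝ) ^ n) :=
          Real.logb_le_logb_of_le hq' (hpos n) (by exact_mod_cast ncard_channelOutputs_le_pow 𝓘 n)
      _ = n := by rw [Real.logb_pow, Real.logb_self_eq_one hq', mul_one]
  refine le_limsup_of_frequently_le (eventually_atTop.2 ⟨1, fun n hn => ?_⟩).frequently hbdd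
  rw [le_div_iff₀ (by positivity), mul_comm, ← Real.logb_pow]
  exact Real.logb_le_logb_of_le hq' (pow_pos hc n) (h n)

lemma capacity_le_logb_of_le_pow (hq : 1 < q) {M : ℝ}
    (h : ∀ n, (channelOutputs 𝓘 n).ncard ≤ M ^ n) : capacity 𝓘 ≤ Real.logb q M := by
  have hq' : (1 : ℝ) < q := by exact_mod_cast hq
  have hone : ∀ n, (1 : ℝ) ≤ (channelOutputs 𝓘 n).ncard := fun n => by
    exact_mod_cast one_le_ncard_channelOutputs 𝓘 (by omega) n
  refine limsup_le_of_le (isCoboundedUnder_le_of_le atTop fun n =>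
    div_nonneg (Real.logb_nonneg hq' (hone n)) n.cast_nonneg) (eventually_atTop.2 ⟨1, fun n hn => ?_⟩)
  rw [div_le_iff₀ (by positivity), mul_comm, ← Real.logb_pow]
  exact Real.logb_le_logb_of_le hq' (by linarith [hone n]) (h n)

end ChannelOutputs

lemma sum_range_pow_le {a N : ℕ} (haN : a ≤ N) (hN : 1 ≤ N) (n : ℕ) :
    ∑ m ∈ range (n + 1), a ^ m ≤ (n + 1) * N ^ n :=
  calc ∑ m ∈ range (n + 1), a ^ m ≤ ∑ _m ∈ range (n + 1), N ^ n :=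
        sum_le_sum fun m hm => (Nat.pow_le_pow_left haN m).trans
          (Nat.pow_le_pow_right hN (Nat.lt_succ_iff.1 (mem_range.1 hm)))
    _ = (n + 1) * N ^ n := by simp

lemma succ_mul_pow_le_mul_exp_pow {N : ℝ} (hN : 0 ≤ N) (n : ℕ) :
    (n + 1) * N ^ n ≤ (N * Real.exp 1) ^ n := by
  rw [mul_pow, Real.exp_one_pow, mul_comm]
  exact mul_le_mul_of_nonneg_left (Real.add_one_le_exp n) (pow_nonneg hN n)

theorem capacity_general_bounds_general (q t : ℕ) (hq : 2 ≤ q) (ht : 2 ≤ t)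
    (𝓘 : Fin t → Finset (Fin q))
    (P : SimpleGraph (Fin q))
    (hP : ∀ u v : Fin q, P.Adj u v ↔ u ≠ v ∧ ∃ i, u ∈ 𝓘 i ∧ v ∈ 𝓘 i)
    (k : ℕ) (hk : k = P.cliqueNum) :
    Real.logb q k ≤ capacity 𝓘 ∧
    capacity 𝓘 ≤ Real.logb q ((k : ℝ) * t * Real.exp 1) := by
  have hk1 : 1 ≤ k := by
    simpa [hk] using SimpleGraph.IsClique.card_le_cliqueNum (G := P) (t := {⟨0, by omega⟩})
      (tc := by simp)
  obtain ⟨s, hs⟩ := P.exists_isNClique_cliqueNum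
  have hchannel : ∀ i, #(𝓘 i) ≤ k := fun i => hk ▸
    SimpleGraph.IsClique.card_le_cliqueNum (tc := fun u hu v hv huv => (hP u v).2 ⟨huv, i, hu, hv⟩)
  have hunion : #(univ.biUnion 𝓘) ≤ k * t :=
    card_biUnion_le.trans ((sum_le_card_nsmul _ _ _ fun i _ => hchannel i).trans (by simp [mul_comm]))
  constructor
  · refine logb_le_capacity_of_pow_le 𝓘 (by omega) (by exact_mod_cast hk1) fun n => ?_
    have := pow_card_le_ncard_channelOutputs 𝓘 s
      (hs.isClique.mono' fun u v huv => ((hP u v).1 huv).2) n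
    rw [hs.card_eq, ← hk] at this
    exact_mod_cast this
  · refine capacity_le_logb_of_le_pow 𝓘 (by omega) fun n => ?_
    calc ((channelOutputs 𝓘 n).ncard : ℝ) ≤ ((n + 1) * (k * t) ^ n : ℕ) := by
          exact_mod_cast (ncard_channelOutputs_le_sum_pow 𝓘 (fun i => subset_biUnion_of_mem 𝓘
            (mem_univ i)) n).trans (sum_range_pow_le hunion (Nat.one_le_iff_ne_zero.2
              (by positivity)) n)
      _ ≤ _ := by push_cast; exact succ_mul_pow_le_mul_exp_pow (by positivity) n

/-- general bounds on the capacity of an irreducible sequence of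
coloring channels in terms of the clique number `k` of its pairs graph:
`log_q k ≤ cap(𝓘) ≤ log_q (k t e)`. -/
theorem capacity_general_bounds (q t : ℕ) (hq : 2 ≤ q) (ht : 2 ≤ t)
    (𝓘 : Fin t → Finset (Fin q)) (hne : ∀ i, (𝓘 i).Nonempty)
    (hsub : ∀ i j : Fin t, i ≠ j → ¬ 𝓘 i ⊆ 𝓘 j)
    (hnsep : ¬ ∃ S : Finset (Fin t), S.Nonempty ∧ S ≠ Finset.univ ∧
      (S.biUnion 𝓘) ∩ (Sᶜ.biUnion 𝓘) = ∅)
    (P : SimpleGraph (Fin q))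
    (hP : ∀ u v : Fin q, P.Adj u v ↔ u ≠ v ∧ ∃ i, u ∈ 𝓘 i ∧ v ∈ 𝓘 i)
    (k : ℕ) (hk : k = P.cliqueNum) :
    Real.logb q k ≤ capacity 𝓘 ∧
    capacity 𝓘 ≤ Real.logb q ((k : ℝ) * t * Real.exp 1) :=
  capacity_general_bounds_general q t hq ht 𝓘 P hP k hk
end
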